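/- Let T be an A-bounded operator, suppose the range of A has dimension at least 3, and let q ∈ D. Then W_{q,A}(T) = ⋃_{x ∈ H, ‖x‖_A = 1} { a ∈ ℂ : |a − q⟨Tx,x⟩_A| ≤ √(1−|q|²) · (‖Tx‖_A² − |⟨Tx,x⟩_A|²)^{1/2} }. -/

import Mathlib

noncomputable section

open Filter

variable {H : Type*} [NormedAddCommGroup H] [InnerProductSpace ℂ H] [CompleteSpace H]

/-- The paper's semi-inner product `⟨x, y⟩_A = ⟨A x, y⟩`, where the inner product of the
paper is linear in the *first* argument; in Mathlib's convention this is `⟪y, A x⟫_ℂ`. -/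
def sipA (A : H →L[ℂ] H) (x y : H) : ℂ := inner ℂ y (A x)

/-- The `A`-seminorm `‖x‖_A = ⟨A x, x⟩ ^ (1/2)`. -/
def semiNormA (A : H →L[ℂ] H) (x : H) : ℝ := Real.sqrt (sipA A x x).re

/-- The `A`-`q`-numerical range `W_{q,A}(T)`. -/
def WqA (A : H →L[ℂ] H) (q : ℂ) (T : H →L[ℂ] H) : Set ℂ :=
  {z | ∃ x y : H, semiNormA A x = 1 ∧ semiNormA A y = 1 ∧ sipA A x y = q ∧ z = sipA A (T x) y}

/-- The `A`-`q`-numerical radius `w_{q,A}(T)`. -/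
def wqA (A : H →L[ℂ] H) (q : ℂ) (T : H →L[ℂ] H) : ℝ := sSup ((norm : ℂ → ℝ) '' WqA A q T)

/-- The `A`-operator seminorm `‖T‖_A = sup {‖T x‖_A : ‖x‖_A ≤ 1}`. -/
def opNormA (A T : H →L[ℂ] H) : ℝ :=
  sSup ((fun x => semiNormA A (T x)) '' {x : H | semiNormA A x ≤ 1})

/-- `T` is `A`-bounded: `‖T x‖_A ≤ c ‖x‖_A` for some `c > 0`. -/
def ABounded (A T : H →L[ℂ] H) : Prop := ∃ c > 0, ∀ x : H, semiNormA A (T x) ≤ c * semiNormA A x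

/-!
Writing `⟨x, y⟩_A = ⟪A^{1/2} y, A^{1/2} x⟫`, everything happens in the range `K` of `A^{1/2}`,
with `e = A^{1/2} x` and `u = A^{1/2} (T x)`. For a unit vector `v` with `⟪v, e⟫ = q`, the
quantity `⟪v, u⟫ - q ⟪e, u⟫` is the inner product of the components of `v` and `u` orthogonal
to `e`, and Cauchy–Schwarz bounds it by the radius of the disk. Conversely, every point of the
disk is `⟪v, u⟫` for some `v = q̄ e + l s + μ w`, where `s` is the component of `u` orthogonal
to `e` and `w` is a unit vector of `K` orthogonal to `e` and `u`; such a `w` exists because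
`K ⊇ range A` has dimension at least `3`.
-/

open scoped InnerProductSpace ComplexConjugate

section InnerProduct

universe u v

variable {𝕜 : Type u} {E : Type v} [RCLike 𝕜] [NormedAddCommGroup E] [InnerProductSpace 𝕜 E]

theorem inner_sub_inner_smul_self_eq_zero {e : E} (he : ‖e‖ = 1) (v : E) :
    ⟪e, v - ⟪e, v⟫_𝕜 • e⟫_𝕜 = 0 := by
  simp [inner_sub_right, inner_smul_right, inner_self_eq_norm_sq_to_K, he]

theorem norm_sub_inner_smul_sq {e : E} (he : ‖e‖ = 1) (v : E) :
    ‖v - ⟪e, v⟫_𝕜 • e‖ ^ 2 = ‖v‖ ^ 2 - ‖⟪e, v⟫_𝕜‖ ^ 2 := by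
  have h := norm_add_sq_eq_norm_sq_add_norm_sq_of_inner_eq_zero (𝕜 := 𝕜) (⟪e, v⟫_𝕜 • e)
    (v - ⟪e, v⟫_𝕜 • e) (by rw [inner_smul_left, inner_sub_inner_smul_self_eq_zero he, mul_zero])
  rw [add_sub_cancel, norm_smul, he, mul_one] at h
  linarith

theorem norm_add_add_sq_of_inner_eq_zero {x y z : E} (hxy : ⟪x, y⟫_𝕜 = 0)
    (hxz : ⟪x, z⟫_𝕜 = 0) (hyz : ⟪y, z⟫_𝕜 = 0) :
    ‖x + y + z‖ ^ 2 = ‖x‖ ^ 2 + ‖y‖ ^ 2 + ‖z‖ ^ 2 := by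
  have h₁ := norm_add_sq_eq_norm_sq_add_norm_sq_of_inner_eq_zero (𝕜 := 𝕜) x y hxy
  have h₂ := norm_add_sq_eq_norm_sq_add_norm_sq_of_inner_eq_zero (𝕜 := 𝕜) (x + y) z
    (by rw [inner_add_left, hxz, hyz, add_zero])
  simp only [← sq] at h₁ h₂
  rw [h₂, h₁]

-- Cauchy–Schwarz for the components of `v` and `u` orthogonal to `e`.
theorem norm_inner_sub_inner_mul_inner_le {e v : E} (he : ‖e‖ = 1) (hv : ‖v‖ = 1) (u : E) :
    ‖⟪v, u⟫_𝕜 - ⟪v, e⟫_𝕜 * ⟪e, u⟫_𝕜‖ ≤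
      √(1 - ‖⟪v, e⟫_𝕜‖ ^ 2) * √(‖u‖ ^ 2 - ‖⟪e, u⟫_𝕜‖ ^ 2) := by
  have hinner : ⟪v - ⟪e, v⟫_𝕜 • e, u - ⟪e, u⟫_𝕜 • e⟫_𝕜 = ⟪v, u⟫_𝕜 - ⟪v, e⟫_𝕜 * ⟪e, u⟫_𝕜 := by
    rw [inner_sub_left _ _ (u - _), inner_smul_left, inner_sub_inner_smul_self_eq_zero he,
      mul_zero, sub_zero, inner_sub_right, inner_smul_right, mul_comm]
  rw [← hinner, norm_inner_symm v e, ← one_pow 2, ← hv, ← norm_sub_inner_smul_sq he,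
    ← norm_sub_inner_smul_sq he, Real.sqrt_sq (norm_nonneg _), Real.sqrt_sq (norm_nonneg _)]
  exact norm_inner_le_norm _ _

theorem exists_mem_span_inner_eq_of_inner_eq_zero {e s w : E} (he : ‖e‖ = 1) (hw : ‖w‖ = 1)
    (hes : ⟪e, s⟫_𝕜 = 0) (hew : ⟪e, w⟫_𝕜 = 0) (hsw : ⟪s, w⟫_𝕜 = 0) {q c : 𝕜} (hq : ‖q‖ ≤ 1)
    (hc : ‖c‖ ^ 2 ≤ (1 - ‖q‖ ^ 2) * ‖s‖ ^ 2) :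
    ∃ v ∈ Submodule.span 𝕜 {e, s, w}, ‖v‖ = 1 ∧ ⟪v, e⟫_𝕜 = q ∧ ⟪v, s⟫_𝕜 = c := by
  -- If `s = 0` then `c = 0`, so the junk value `l = 0` is the right coefficient.
  set l : 𝕜 := conj c / (‖s‖ : 𝕜) ^ 2 with hl
  have hl_inner : conj l * (‖s‖ : 𝕜) ^ 2 = c := by
    rcases eq_or_ne ‖s‖ 0 with h0 | h0
    · have : c = 0 := by simpa [h0] using hc
      simp [h0, this]
    · have : (‖s‖ : 𝕜) ≠ 0 := by exact_mod_cast h0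
      simp [hl, map_div₀]
      field_simp
  have hl_norm : (‖l‖ * ‖s‖) ^ 2 = ‖c‖ ^ 2 / ‖s‖ ^ 2 := by
    rw [hl, norm_div, RCLike.norm_conj, norm_pow, RCLike.norm_ofReal, abs_norm, mul_pow]
    rcases eq_or_ne ‖s‖ 0 with h0 | h0
    · simp [h0]
    · field_simp
  have hμ : 0 ≤ 1 - ‖q‖ ^ 2 - ‖c‖ ^ 2 / ‖s‖ ^ 2 := by
    have := div_le_of_le_mul₀ (sq_nonneg _) (by nlinarith [norm_nonneg q]) hc
    linarith
  set μ : ℝ := √(1 - ‖q‖ ^ 2 - ‖c‖ ^ 2 / ‖s‖ ^ 2)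
  have hse : ⟪s, e⟫_𝕜 = 0 := inner_eq_zero_symm.mp hes
  have hwe : ⟪w, e⟫_𝕜 = 0 := inner_eq_zero_symm.mp hew
  have hws : ⟪w, s⟫_𝕜 = 0 := inner_eq_zero_symm.mp hsw
  have hv : ‖conj q • e + l • s + (μ : 𝕜) • w‖ ^ 2 = 1 := by
    rw [norm_add_add_sq_of_inner_eq_zero (𝕜 := 𝕜) (by simp [inner_smul_left, inner_smul_right, hes])
      (by simp [inner_smul_left, inner_smul_right, hew])
      (by simp [inner_smul_left, inner_smul_right, hsw])]
    rw [norm_smul, norm_smul, norm_smul, hl_norm, he, hw, RCLike.norm_conj,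
      RCLike.norm_ofReal, abs_of_nonneg (Real.sqrt_nonneg _), mul_one, mul_one, Real.sq_sqrt hμ]
    ring
  refine ⟨conj q • e + l • s + (μ : 𝕜) • w, ?_,
    (pow_eq_one_iff_of_nonneg (norm_nonneg _) two_ne_zero).mp hv, ?_, ?_⟩
  · have hmem : ∀ x ∈ ({e, s, w} : Set E), x ∈ Submodule.span 𝕜 {e, s, w} :=
      fun x hx => Submodule.subset_span hx
    exact add_mem (add_mem (Submodule.smul_mem _ _ (hmem e (by simp)))
      (Submodule.smul_mem _ _ (hmem s (by simp)))) (Submodule.smul_mem _ _ (hmem w (by simp)))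
  · simp [inner_add_left, inner_smul_left, hse, hwe, inner_self_eq_norm_sq_to_K, he]
  · simp [inner_add_left, inner_smul_left, hes, hws, inner_self_eq_norm_sq_to_K, hl_inner]

theorem Submodule.exists_norm_eq_one_inner_eq_zero {K : Submodule 𝕜 E}
    (hK : 3 ≤ Module.rank 𝕜 K) (a b : E) :
    ∃ w ∈ K, ‖w‖ = 1 ∧ ⟪w, a⟫_𝕜 = 0 ∧ ⟪w, b⟫_𝕜 = 0 := by
  set f : K →ₗ[𝕜] 𝕜 × 𝕜 := ((innerₛₗ 𝕜 a).prod (innerₛₗ 𝕜 b)).comp K.subtype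
  have hker : LinearMap.ker f ≠ ⊥ := by
    intro h
    have hrange : Module.rank 𝕜 (LinearMap.range f) ≤ 2 :=
      (Submodule.rank_le _).trans (by simp [one_add_one_eq_two])
    have hnullity := f.lift_rank_range_add_rank_ker
    rw [h, rank_bot, Cardinal.lift_zero, add_zero] at hnullity
    have : (3 : Cardinal) ≤ 2 :=
      calc (3 : Cardinal) ≤ Cardinal.lift (Module.rank 𝕜 K) := by
            simpa using Cardinal.lift_le.{u}.mpr hK
        _ = Cardinal.lift (Module.rank 𝕜 (LinearMap.range f)) := hnullity.symm
        _ ≤ 2 := by simpa using Cardinal.lift_le.{v}.mpr hrange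
    norm_num at this
  obtain ⟨⟨v, hvK⟩, hv, hv0⟩ := (Submodule.ne_bot_iff _).mp hker
  simp only [f, LinearMap.mem_ker, LinearMap.comp_apply, LinearMap.prod_apply,
    Submodule.subtype_apply, coe_innerₛₗ_apply, Function.prod, Prod.mk_eq_zero] at hv
  have hv0 : v ≠ 0 := fun h => hv0 (Subtype.ext h)
  refine ⟨((‖v‖⁻¹ : ℝ) : 𝕜) • v, K.smul_mem _ hvK, ?_, ?_, ?_⟩
  · rw [norm_smul, RCLike.norm_ofReal, abs_inv, abs_norm, inv_mul_cancel₀ (norm_ne_zero_iff.mpr hv0)]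
  · rw [inner_smul_left, inner_eq_zero_symm.mp hv.1, mul_zero]
  · rw [inner_smul_left, inner_eq_zero_symm.mp hv.2, mul_zero]

theorem Submodule.exists_mem_inner_eq_of_norm_sub_le {K : Submodule 𝕜 E}
    (hK : 3 ≤ Module.rank 𝕜 K) {e u : E} (he : e ∈ K) (hu : u ∈ K) (he₁ : ‖e‖ = 1) {q a : 𝕜}
    (hq : ‖q‖ ≤ 1)
    (ha : ‖a - q * ⟪e, u⟫_𝕜‖ ≤ √(1 - ‖q‖ ^ 2) * √(‖u‖ ^ 2 - ‖⟪e, u⟫_𝕜‖ ^ 2)) :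
    ∃ v ∈ K, ‖v‖ = 1 ∧ ⟪v, e⟫_𝕜 = q ∧ ⟪v, u⟫_𝕜 = a := by
  obtain ⟨w, hwK, hw, hwe, hwu⟩ := K.exists_norm_eq_one_inner_eq_zero hK e u
  set s := u - ⟪e, u⟫_𝕜 • e
  have hsw : ⟪s, w⟫_𝕜 = 0 :=
    inner_eq_zero_symm.mp (by simp [s, inner_sub_right, inner_smul_right, hwu, hwe])
  have hc : ‖a - q * ⟪e, u⟫_𝕜‖ ^ 2 ≤ (1 - ‖q‖ ^ 2) * ‖s‖ ^ 2 := by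
    rw [← norm_sub_inner_smul_sq he₁ u, Real.sqrt_sq (norm_nonneg _)] at ha
    have hq' : 0 ≤ 1 - ‖q‖ ^ 2 := by nlinarith [norm_nonneg q]
    simpa [mul_pow, Real.sq_sqrt hq'] using pow_le_pow_left₀ (norm_nonneg _) ha 2
  obtain ⟨v, hv, hv₁, hve, hvs⟩ := exists_mem_span_inner_eq_of_inner_eq_zero he₁ hw
    (inner_sub_inner_smul_self_eq_zero he₁ u) (inner_eq_zero_symm.mp hwe) hsw hq hc
  refine ⟨v, Submodule.span_le.mpr ?_ hv, hv₁, hve, ?_⟩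
  · simp [Set.insert_subset_iff, he, hwK, K.sub_mem hu (K.smul_mem _ he)]
  · rw [← sub_add_cancel u (⟪e, u⟫_𝕜 • e), inner_add_right, inner_smul_right, hvs, hve]
    ring

end InnerProduct
section SquareRoot

variable {A : H →L[ℂ] H}

theorem sqrt_mul_sqrt_self_of_isPositive (hA : A.IsPositive) : CFC.sqrt A * CFC.sqrt A = A :=
  CFC.sqrt_mul_sqrt_self A ((ContinuousLinearMap.nonneg_iff_isPositive A).mpr hA)

theorem sipA_eq_inner_sqrt (hA : A.IsPositive) (x y : H) :
    sipA A x y = ⟪CFC.sqrt A y, CFC.sqrt A x⟫_ℂ := by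
  rw [← ContinuousLinearMap.adjoint_inner_right,
    (IsSelfAdjoint.of_nonneg (CFC.sqrt_nonneg A)).adjoint_eq, ← mul_apply_eq_comp,
    sqrt_mul_sqrt_self_of_isPositive hA, sipA]

theorem semiNormA_eq_norm_sqrt (hA : A.IsPositive) (x : H) :
    semiNormA A x = ‖CFC.sqrt A x‖ := by
  rw [semiNormA, sipA_eq_inner_sqrt hA, inner_self_eq_norm_sq_to_K]
  norm_cast
  exact Real.sqrt_sq (norm_nonneg _)

theorem range_le_range_sqrt (hA : A.IsPositive) :
    LinearMap.range A.toLinearMap ≤ LinearMap.range (CFC.sqrt A).toLinearMap := by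
  conv_lhs => rw [← sqrt_mul_sqrt_self_of_isPositive hA]
  exact LinearMap.range_comp_le_range _ _

end SquareRoot

theorem stmt_5_general (A : H →L[ℂ] H) (hA : A.IsPositive)
    (hrank : 3 ≤ Module.rank ℂ (LinearMap.range A.toLinearMap))
    (T : H →L[ℂ] H)
    (q : ℂ) (hq : ‖q‖ ≤ 1) :
    WqA A q T = ⋃ x ∈ {x : H | semiNormA A x = 1},
      {a : ℂ | ‖a - q * sipA A (T x) x‖ ≤
        Real.sqrt (1 - ‖q‖ ^ 2) *
          Real.sqrt (semiNormA A (T x) ^ 2 - ‖sipA A (T x) x‖ ^ 2)} := by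
  ext z
  simp only [WqA, Set.mem_ofPred_eq, Set.mem_iUnion, exists_prop, sipA_eq_inner_sqrt hA,
    semiNormA_eq_norm_sqrt hA]
  constructor
  · rintro ⟨x, y, hx, hy, rfl, rfl⟩
    exact ⟨x, hx, norm_inner_sub_inner_mul_inner_le hx hy _⟩
  · rintro ⟨x, hx, hz⟩
    obtain ⟨_, ⟨y, rfl⟩, hy, hxy, rfl⟩ :=
      Submodule.exists_mem_inner_eq_of_norm_sub_le
        (hrank.trans (Submodule.rank_mono (range_le_range_sqrt hA))) ⟨x, rfl⟩ ⟨T x, rfl⟩ hx hq hz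
    exact ⟨x, y, hx, hy, hxy, rfl⟩

theorem stmt_5 (A : H →L[ℂ] H) (hA : A.IsPositive)
    (hrank : 3 ≤ Module.rank ℂ (LinearMap.range A.toLinearMap))
    (T : H →L[ℂ] H) (hT : ABounded A T)
    (q : ℂ) (hq : ‖q‖ ≤ 1) :
    WqA A q T = ⋃ x ∈ {x : H | semiNormA A x = 1},
      {a : ℂ | ‖a - q * sipA A (T x) x‖ ≤
        Real.sqrt (1 - ‖q‖ ^ 2) *
          Real.sqrt (semiNormA A (T x) ^ 2 - ‖sipA A (T x) x‖ ^ 2)} :=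
  stmt_5_general A hA hrank T q hq
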